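/- (Theorem 1, uniqueness form.) Suppose Π_{XY} ≠ 2·E_{XY} for every superedge {X,Y} ∈ P. Then every weight function ω supported on P that minimizes RE_1 over all weight functions supported on P satisfies, for every superedge {X,Y} ∈ P, ω_{XY}/Π_{XY} = 1 if Π_{XY} < 2·E_{XY} and ω_{XY}/Π_{XY} = 0 if Π_{XY} > 2·E_{XY}; in particular all reconstructed subedge weights of a minimizer are 0 or 1, exactly as in the unweighted summarization model. -/

import Mathlib

open scoped Classical

/-- `PiCount c z` is the number `Π_z` of unordered pairs `{i, j}` of distinct
nodes with `{c i, c j} = z` (computed as half the number of ordered pairs). -/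
noncomputable def PiCount {V S : Type*} [Fintype V] (c : V → S) (z : Sym2 S) : ℝ :=
  ((Finset.univ.offDiag.filter
      (fun p : V × V => Sym2.mk (c p.1) (c p.2) = z)).card : ℝ) / 2

/-- `ECount A c z` is the number `E_z` of unordered pairs `{i, j}` of distinct
nodes with `{c i, c j} = z` and `A i j = 1` (half the number of ordered pairs). -/
noncomputable def ECount {V S : Type*} [Fintype V] (A : V → V → ℝ) (c : V → S)
    (z : Sym2 S) : ℝ :=
  ((Finset.univ.offDiag.filter
      (fun p : V × V => Sym2.mk (c p.1) (c p.2) = z ∧ A p.1 p.2 = 1)).card : ℝ) / 2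

/-- The matrix reconstructed from the weighted summary graph `(P, w)`:
`A'_{ij} = w_{c i, c j} / Π_{c i, c j}` if `i ≠ j` and `{c i, c j} ∈ P`, else `0`. -/
noncomputable def reconW {V S : Type*} [Fintype V] (c : V → S) (P : Finset (Sym2 S))
    (w : Sym2 S → ℝ) (i j : V) : ℝ :=
  if i ≠ j ∧ Sym2.mk (c i) (c j) ∈ P then
    w (Sym2.mk (c i) (c j)) / PiCount c (Sym2.mk (c i) (c j)) else 0

/-- The `L1` reconstruction error of the weighted summary graph `(P, w)`:
the sum of `|A i j − A' i j|` over unordered pairs of distinct nodes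
(computed as half the sum over ordered pairs). -/
noncomputable def RE1 {V S : Type*} [Fintype V] (A : V → V → ℝ) (c : V → S)
    (P : Finset (Sym2 S)) (w : Sym2 S → ℝ) : ℝ :=
  (∑ p ∈ Finset.univ.offDiag, |A p.1 p.2 - reconW c P w p.1 p.2|) / 2

/-- The matrix reconstructed from the unweighted summary graph `P'`:
`Ǎ_{ij} = 1` if `i ≠ j` and `{c i, c j} ∈ P'`, else `0`. -/
noncomputable def reconU {V S : Type*} (c : V → S) (P' : Finset (Sym2 S))
    (i j : V) : ℝ :=
  if i ≠ j ∧ Sym2.mk (c i) (c j) ∈ P' then 1 else 0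

/-- The `L1` reconstruction error of the unweighted summary graph `P'`. -/
noncomputable def RE1U {V S : Type*} [Fintype V] (A : V → V → ℝ) (c : V → S)
    (P' : Finset (Sym2 S)) : ℝ :=
  (∑ p ∈ Finset.univ.offDiag, |A p.1 p.2 - reconU c P' p.1 p.2|) / 2

open Finset

/-!
The reconstruction error splits over superedges, and on a superedge `z ∈ P` it depends on the
weight only through the subedge weight `t = w z / Π_z`: there it equals `g |1 - t| + b |t|`,
where `g = 2 E_z` and `b = 2 Π_z - 2 E_z` count the (ordered) pairs over `z` with `A = 1` and
`A = 0`. A minimizer `w` therefore minimizes this piecewise linear function of `t`, whose unique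
minimizer is `1` if `b < g` and `0` if `g < b`.
-/

theorem eq_one_of_mul_abs_sub_add_mul_abs_le {g b t : ℝ} (hb : 0 ≤ b) (hbg : b < g)
    (h : g * |1 - t| + b * |t| ≤ b) : t = 1 := by
  have htri : 1 - |1 - t| ≤ |t| := by
    simpa using abs_sub_abs_le_abs_sub (1 : ℝ) (1 - t)
  have hle : (g - b) * |1 - t| ≤ 0 := by nlinarith
  have h0 : |1 - t| = 0 :=
    le_antisymm (nonpos_of_mul_nonpos_right hle (sub_pos.mpr hbg)) (abs_nonneg _)
  linarith [abs_eq_zero.mp h0]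

theorem eq_zero_of_mul_abs_sub_add_mul_abs_le {g b t : ℝ} (hg : 0 ≤ g) (hgb : g < b)
    (h : g * |1 - t| + b * |t| ≤ g) : t = 0 := by
  have := eq_one_of_mul_abs_sub_add_mul_abs_le (t := 1 - t) hg hgb
    (by rwa [sub_sub_cancel, add_comm])
  linarith

theorem sum_abs_sub_eq_of_zero_or_one {α : Type*} (s : Finset α) (f : α → ℝ)
    (hf : ∀ a ∈ s, f a = 0 ∨ f a = 1) (t : ℝ) :
    ∑ a ∈ s, |f a - t| =
      #(s.filter (f · = 1)) * |1 - t| + #(s.filter (f · ≠ 1)) * |t| := by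
  rw [← sum_filter_add_sum_filter_not s (f · = 1)]
  congr 1
  · rw [sum_congr rfl fun a ha => by rw [(mem_filter.mp ha).2], sum_const, nsmul_eq_mul]
  · refine (sum_congr rfl fun a ha => ?_).trans (by rw [sum_const, nsmul_eq_mul])
    obtain ⟨has, ha1⟩ := mem_filter.mp ha
    rw [(hf a has).resolve_right ha1, zero_sub, abs_neg]

section Summary

variable {V S : Type*} [Fintype V]

noncomputable def pairsOver (c : V → S) (z : Sym2 S) : Finset (V × V) :=
  univ.offDiag.filter fun p => s(c p.1, c p.2) = z

theorem PiCount_eq_card_pairsOver (c : V → S) (z : Sym2 S) :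
    PiCount c z = #(pairsOver c z) / 2 := rfl

theorem ECount_eq_card_pairsOver (A : V → V → ℝ) (c : V → S) (z : Sym2 S) :
    ECount A c z = #((pairsOver c z).filter fun p => A p.1 p.2 = 1) / 2 := by
  rw [ECount, pairsOver, filter_filter]

theorem reconW_update_of_ne (c : V → S) (P : Finset (Sym2 S)) (w : Sym2 S → ℝ)
    {z : Sym2 S} (v : ℝ) {i j : V} (h : s(c i, c j) ≠ z) :
    reconW c P (Function.update w z v) i j = reconW c P w i j := by
  rw [reconW, reconW, Function.update_of_ne h]

theorem two_mul_RE1_eq (A : V → V → ℝ) (c : V → S) {P : Finset (Sym2 S)} {z : Sym2 S}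
    (hz : z ∈ P) (w : Sym2 S → ℝ) :
    2 * RE1 A c P w = ∑ p ∈ pairsOver c z, |A p.1 p.2 - w z / PiCount c z| +
      ∑ p ∈ univ.offDiag.filter (fun p => s(c p.1, c p.2) ≠ z),
        |A p.1 p.2 - reconW c P w p.1 p.2| := by
  rw [RE1, mul_div_cancel₀ _ two_ne_zero, ← sum_filter_add_sum_filter_not _
    fun p : V × V => s(c p.1, c p.2) = z]
  congr 1
  refine sum_congr rfl fun p hp => ?_
  obtain ⟨hpd, hpz⟩ := mem_filter.mp hp
  rw [reconW, if_pos ⟨(mem_offDiag.mp hpd).2.2, hpz ▸ hz⟩, hpz]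

theorem sum_pairsOver_le_of_isMin (A : V → V → ℝ) (c : V → S) {P : Finset (Sym2 S)}
    {w : Sym2 S → ℝ} (hmin : ∀ w' : Sym2 S → ℝ, RE1 A c P w ≤ RE1 A c P w')
    {z : Sym2 S} (hz : z ∈ P) (v : ℝ) :
    ∑ p ∈ pairsOver c z, |A p.1 p.2 - w z / PiCount c z| ≤
      ∑ p ∈ pairsOver c z, |A p.1 p.2 - v / PiCount c z| := by
  have hoff : ∑ p ∈ univ.offDiag.filter (fun p => s(c p.1, c p.2) ≠ z),
      |A p.1 p.2 - reconW c P (Function.update w z v) p.1 p.2| =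
      ∑ p ∈ univ.offDiag.filter (fun p => s(c p.1, c p.2) ≠ z),
      |A p.1 p.2 - reconW c P w p.1 p.2| :=
    sum_congr rfl fun p hp => by rw [reconW_update_of_ne c P w v (mem_filter.mp hp).2]
  have h := mul_le_mul_of_nonneg_left (hmin (Function.update w z v)) zero_le_two
  rw [two_mul_RE1_eq A c hz, two_mul_RE1_eq A c hz, Function.update_self, hoff] at h
  linarith

end Summary

theorem stmt_10_general {V S : Type*} [Fintype V]
    (A : V → V → ℝ)
    (h01 : ∀ i j : V, A i j = 0 ∨ A i j = 1)
    (c : V → S)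
    (P : Finset (Sym2 S)) (hP : ∀ z ∈ P, 1 ≤ PiCount c z)
    (w : Sym2 S → ℝ) (hmin : ∀ w' : Sym2 S → ℝ, RE1 A c P w ≤ RE1 A c P w') :
    ∀ z ∈ P, (PiCount c z < 2 * ECount A c z → w z / PiCount c z = 1) ∧
      (2 * ECount A c z < PiCount c z → w z / PiCount c z = 0) := by
  intro z hz
  have hPi : PiCount c z ≠ 0 := (one_pos.trans_le (hP z hz)).ne'
  set g := (((pairsOver c z).filter fun p => A p.1 p.2 = 1).card : ℝ)
  set b := (((pairsOver c z).filter fun p => A p.1 p.2 ≠ 1).card : ℝ)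
  have hPi_eq : PiCount c z = (g + b) / 2 := by
    rw [PiCount_eq_card_pairsOver, ← card_filter_add_card_filter_not
      (s := pairsOver c z) (p := fun p => A p.1 p.2 = 1), Nat.cast_add]
  have hE : ECount A c z = g / 2 := ECount_eq_card_pairsOver A c z
  have herr (t : ℝ) : ∑ p ∈ pairsOver c z, |A p.1 p.2 - t| = g * |1 - t| + b * |t| :=
    sum_abs_sub_eq_of_zero_or_one _ (fun p : V × V => A p.1 p.2) (fun p _ => h01 p.1 p.2) t
  have hmin_z := sum_pairsOver_le_of_isMin A c hmin hz
  constructor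
  · intro hlt
    refine eq_one_of_mul_abs_sub_add_mul_abs_le (g := g) (b := b) (Nat.cast_nonneg _)
      (by linarith) ?_
    have h := hmin_z (PiCount c z)
    rw [div_self hPi, herr, herr] at h
    simpa only [sub_self, abs_zero, abs_one, mul_zero, mul_one, zero_add] using h
  · intro hlt
    refine eq_zero_of_mul_abs_sub_add_mul_abs_le (g := g) (b := b) (Nat.cast_nonneg _)
      (by linarith) ?_
    have h := hmin_z 0
    rw [zero_div, herr, herr] at h
    simpa only [sub_zero, abs_zero, abs_one, mul_zero, mul_one, add_zero] using h

/-- (Theorem 1, uniqueness form.) Suppose `Π_z ≠ 2·E_z` for every superedge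
`z ∈ P`.  Then every weight function `w` supported on `P` minimizing `RE₁`
over all weight functions supported on `P` satisfies, for every `z ∈ P`,
`w_z/Π_z = 1` if `Π_z < 2·E_z` and `w_z/Π_z = 0` if `Π_z > 2·E_z`. -/
theorem stmt_10 {V S : Type*} [Fintype V] [Fintype S]
    (A : V → V → ℝ) (hSym : ∀ i j : V, A i j = A j i) (hDiag : ∀ i : V, A i i = 0)
    (h01 : ∀ i j : V, A i j = 0 ∨ A i j = 1)
    (c : V → S) (hc : Function.Surjective c)
    (P : Finset (Sym2 S)) (hP : ∀ z ∈ P, 1 ≤ PiCount c z)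
    (hne : ∀ z ∈ P, PiCount c z ≠ 2 * ECount A c z)
    (w : Sym2 S → ℝ) (hmin : ∀ w' : Sym2 S → ℝ, RE1 A c P w ≤ RE1 A c P w') :
    ∀ z ∈ P, (PiCount c z < 2 * ECount A c z → w z / PiCount c z = 1) ∧
      (2 * ECount A c z < PiCount c z → w z / PiCount c z = 0) :=
  stmt_10_general A h01 c P hP w hmin
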